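/- Let A ≥ 1, X ∈ [1, A], Z ∈ [1, A], set k = 4A² − 1, u = X + √(X² + k) and w = Z + √(Z² + k). Then (1/2)·[(k+1)·u·w / k² − w/u − u/w] ≤ 1. -/
import Mathlib


/-- the key inequality in the surjectivity proof. -/
theorem stmt_7 (A X Z : ℝ) (hA : 1 ≤ A)
    (hX : 1 ≤ X ∧ X ≤ A) (hZ : 1 ≤ Z ∧ Z ≤ A) :
    (1/2) * ((4 * A ^ 2 - 1 + 1) * (X + Real.sqrt (X ^ 2 + (4 * A ^ 2 - 1))) *
        (Z + Real.sqrt (Z ^ 2 + (4 * A ^ 2 - 1))) / (4 * A ^ 2 - 1) ^ 2 -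
      (Z + Real.sqrt (Z ^ 2 + (4 * A ^ 2 - 1))) / (X + Real.sqrt (X ^ 2 + (4 * A ^ 2 - 1))) -
      (X + Real.sqrt (X ^ 2 + (4 * A ^ 2 - 1))) / (Z + Real.sqrt (Z ^ 2 + (4 * A ^ 2 - 1)))) ≤ 1 := by
  obtain ⟨hX1, hXA⟩ := hX
  obtain ⟨hZ1, hZA⟩ := hZ
  set k : ℝ := 4 * A ^ 2 - 1 with hk
  have hk0 : 0 < k := by nlinarith
  set su := Real.sqrt (X ^ 2 + k) with hsu
  set sz := Real.sqrt (Z ^ 2 + k) with hsz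
  have hsu0 : 0 ≤ su := Real.sqrt_nonneg _
  have hsz0 : 0 ≤ sz := Real.sqrt_nonneg _
  have hsu2 : su ^ 2 = X ^ 2 + k := Real.sq_sqrt (by nlinarith)
  have hsz2 : sz ^ 2 = Z ^ 2 + k := Real.sq_sqrt (by nlinarith)
  have hu0 : 0 < X + su := by linarith
  have hw0 : 0 < Z + sz := by linarith
  -- √(X²+k) ≥ X + A
  have hsuA : X + A ≤ su := by nlinarith [sq_nonneg (su - (X + A)), sq_nonneg (su + (X + A))]
  have hszA : Z + A ≤ sz := by nlinarith [sq_nonneg (sz - (Z + A)), sq_nonneg (sz + (Z + A))]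
  -- k ≥ A·u, k ≥ A·w
  have hku : A * (X + su) ≤ k := by nlinarith
  have hkw : A * (Z + sz) ≤ k := by nlinarith
  -- 2A·u·w ≤ k·(u+w)
  have key2 : 2 * A * ((X + su) * (Z + sz)) ≤ k * ((X + su) + (Z + sz)) := by nlinarith
  have key : (k + 1) * (X + su) ^ 2 * (Z + sz) ^ 2 ≤ k ^ 2 * ((X + su) + (Z + sz)) ^ 2 := by
    have h0 : 0 ≤ 2 * A * ((X + su) * (Z + sz)) := by positivity
    have h := mul_self_le_mul_self h0 key2
    have e1 : (k + 1) * (X + su) ^ 2 * (Z + sz) ^ 2 =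
        (2 * A * ((X + su) * (Z + sz))) * (2 * A * ((X + su) * (Z + sz))) := by
      rw [hk]; ring
    have e2 : (k * ((X + su) + (Z + sz))) * (k * ((X + su) + (Z + sz))) =
        k ^ 2 * ((X + su) + (Z + sz)) ^ 2 := by ring
    linarith
  have hk2 : (0:ℝ) < 2 * (X + su) * (Z + sz) * k ^ 2 := by positivity
  have e : (1/2) * ((k + 1) * (X + su) * (Z + sz) / k ^ 2 -
      (Z + sz) / (X + su) - (X + su) / (Z + sz)) - 1 =
      ((k + 1) * (X + su) ^ 2 * (Z + sz) ^ 2 - k ^ 2 * ((X + su) + (Z + sz)) ^ 2) /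
      (2 * (X + su) * (Z + sz) * k ^ 2) := by
    field_simp
    ring
  have := div_nonpos_of_nonpos_of_nonneg (by linarith : (k + 1) * (X + su) ^ 2 * (Z + sz) ^ 2 - k ^ 2 * ((X + su) + (Z + sz)) ^ 2 ≤ 0) (le_of_lt hk2)
  linarith [e ▸ this]
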